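/- arXiv:2307.11541 — 4 statements merged into one kernel-verified Lean document; each statement's English description precedes it below -/
import Mathlib

section
/- Let γ > 0 be a real number and let σ, u, g be real numbers. Then the Signorini contact conditions hold, i.e. u ≤ g, σ ≤ 0 and σ·(u − g) = 0, if and only if σ = [σ − γ·(u − g)]₋ (the Alart–Curnier reformulation of the Signorini conditions). -/
/-- For a real number `z`, `[z]₋ := min z 0` is the negative part of `z`. -/
noncomputable def negativePartAC (z : ℝ) : ℝ := min z 0

/-- **Alart–Curnier reformulation of the Signorini contact conditions.**
For `γ > 0`, the Signorini conditions `u ≤ g`, `σ ≤ 0`, `σ (u - g) = 0` hold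
iff `σ = [σ - γ (u - g)]₋`. -/
theorem signorini_iff_alartCurnier (γ σ u g : ℝ) (hγ : 0 < γ) :
    (u ≤ g ∧ σ ≤ 0 ∧ σ * (u - g) = 0) ↔ σ = negativePartAC (σ - γ * (u - g)) := by
  unfold negativePartAC
  constructor
  · rintro ⟨h1, h2, h3⟩
    rcases mul_eq_zero.mp h3 with hσ | hd
    · subst hσ
      rw [min_eq_right] <;> nlinarith
    · rw [hd, mul_zero, sub_zero, min_eq_left h2]
  · intro h
    rcases le_total (σ - γ * (u - g)) 0 with hle | hge
    · rw [min_eq_left hle] at h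
      have hd : u - g = 0 := by nlinarith
      refine ⟨by linarith, by nlinarith, by rw [hd, mul_zero]⟩
    · rw [min_eq_right hge] at h
      subst h
      refine ⟨by nlinarith, le_refl 0, by ring⟩
end

section
/- Let E be a real inner product space, let s > 0 and γ > 0 be real numbers, and let σ, u ∈ E. Then the Tresca friction conditions hold, i.e. (if u = 0 then ‖σ‖ ≤ s, and if u ≠ 0 then σ = −(s/‖u‖) • u), if and only if σ = [σ − γ • u]ₛ (the Alart–Curnier reformulation of the Tresca friction conditions). -/
/-!
Both sides say that `σ` lies in the ball of radius `s` and that, when `u ≠ 0`, `σ` is the point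
of the sphere of radius `s` pointing opposite to `u`. For the projection this is the usual
description of `[x]ₛ` when `‖x‖ > s`: the residual `[x]ₛ - x` points opposite to `[x]ₛ`, so
`[x]ₛ = -(s / ‖[x]ₛ - x‖) • ([x]ₛ - x)`. Applied to `x = σ - γ • u`, whose residual is `γ • u`,
and since the Tresca conditions only see the direction of `u`, the scaling by `γ` drops out.
-/

open scoped RealInnerProductSpace

variable {E : Type*} [NormedAddCommGroup E] [InnerProductSpace ℝ E]

/-- Projection of `x` onto the closed ball of radius `r` centered at the origin:
`[x]ᵣ := x` if `‖x‖ ≤ r`, and `[x]ᵣ := (r / ‖x‖) • x` otherwise. -/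
noncomputable def ballProj (r : ℝ) (x : E) : E :=
  if ‖x‖ ≤ r then x else (r / ‖x‖) • x

section BallProj

variable {r : ℝ} {x : E}

theorem ballProj_of_norm_le (h : ‖x‖ ≤ r) : ballProj r x = x := if_pos h

theorem ballProj_of_lt_norm (h : r < ‖x‖) : ballProj r x = (r / ‖x‖) • x := if_neg h.not_ge

theorem norm_ballProj_of_lt_norm (hr : 0 ≤ r) (h : r < ‖x‖) : ‖ballProj r x‖ = r := by
  have hx : 0 < ‖x‖ := hr.trans_lt h
  rw [ballProj_of_lt_norm h, norm_smul, Real.norm_of_nonneg (by positivity)]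
  field_simp

theorem ballProj_eq_self_iff (hr : 0 ≤ r) : ballProj r x = x ↔ ‖x‖ ≤ r := by
  refine ⟨fun h => ?_, ballProj_of_norm_le⟩
  by_contra! hlt
  exact hlt.ne' (h ▸ norm_ballProj_of_lt_norm hr hlt)

theorem ballProj_eq_neg_div_norm_smul (hr : 0 ≤ r) (h : r < ‖x‖) :
    ballProj r x = -(r / ‖ballProj r x - x‖) • (ballProj r x - x) := by
  have hx : 0 < ‖x‖ := hr.trans_lt h
  have hres : ballProj r x - x = -(1 - r / ‖x‖) • x := by
    rw [ballProj_of_lt_norm h]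
    module
  have hres_norm : ‖ballProj r x - x‖ = ‖x‖ - r := by
    rw [hres, norm_smul, norm_neg, Real.norm_of_nonneg (by rw [sub_nonneg, div_le_one hx]; exact h.le)]
    field_simp
  rw [hres_norm, hres, smul_smul, ballProj_of_lt_norm h]
  congr 1
  field_simp [sub_ne_zero.mpr h.ne']

theorem ballProj_neg_div_norm_smul_sub (hr : 0 ≤ r) {w : E} (hw : w ≠ 0) :
    ballProj r (-(r / ‖w‖) • w - w) = -(r / ‖w‖) • w := by
  have hw' : 0 < ‖w‖ := norm_pos_iff.mpr hw
  have hx : -(r / ‖w‖) • w - w = -(r / ‖w‖ + 1) • w := by module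
  have hx_norm : ‖-(r / ‖w‖) • w - w‖ = r + ‖w‖ := by
    rw [hx, norm_smul, norm_neg, Real.norm_of_nonneg (by positivity)]
    field_simp
  rw [ballProj_of_lt_norm (by linarith), hx_norm, hx, smul_smul]
  congr 1
  field_simp

end BallProj

def TrescaFriction (s : ℝ) (σ u : E) : Prop :=
  (u = 0 → ‖σ‖ ≤ s) ∧ (u ≠ 0 → σ = -(s / ‖u‖) • u)

section TrescaFriction

variable {s : ℝ} {σ u : E}

theorem trescaFriction_zero_right : TrescaFriction s σ (0 : E) ↔ ‖σ‖ ≤ s := by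
  simp [TrescaFriction]

theorem trescaFriction_iff_of_ne_zero (hu : u ≠ 0) :
    TrescaFriction s σ u ↔ σ = -(s / ‖u‖) • u := by
  simp [TrescaFriction, hu]

theorem trescaFriction_smul_iff {c : ℝ} (hc : 0 < c) :
    TrescaFriction s σ (c • u) ↔ TrescaFriction s σ u := by
  rcases eq_or_ne u 0 with rfl | hu
  · rw [smul_zero]
  have hcu : c • u ≠ 0 := smul_ne_zero hc.ne' hu
  rw [trescaFriction_iff_of_ne_zero hu, trescaFriction_iff_of_ne_zero hcu, norm_smul,
    Real.norm_of_nonneg hc.le, smul_smul]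
  congr! 2
  field_simp

theorem eq_ballProj_sub_iff (hs : 0 ≤ s) : σ = ballProj s (σ - u) ↔ TrescaFriction s σ u := by
  rcases eq_or_ne u 0 with rfl | hu
  · rw [sub_zero, eq_comm, ballProj_eq_self_iff hs, trescaFriction_zero_right]
  rw [trescaFriction_iff_of_ne_zero hu]
  constructor
  · intro h
    have hlt : s < ‖σ - u‖ := by
      by_contra! hle
      rw [ballProj_of_norm_le hle, eq_comm, sub_eq_self] at h
      exact hu h
    have := ballProj_eq_neg_div_norm_smul hs hlt
    rwa [← h, sub_sub_cancel] at this
  · rintro rfl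
    exact (ballProj_neg_div_norm_smul_sub hs hu).symm

end TrescaFriction

/-- **Alart–Curnier reformulation of the Tresca friction conditions.**
For `s > 0` and `γ > 0`, the Tresca friction conditions hold iff
`σ = [σ - γ • u]ₛ`. -/
theorem tresca_iff_alartCurnier (s γ : ℝ) (hs : 0 < s) (hγ : 0 < γ) (σ u : E) :
    ((u = 0 → ‖σ‖ ≤ s) ∧ (u ≠ 0 → σ = -(s / ‖u‖) • u)) ↔
      σ = ballProj s (σ - γ • u) :=
  (trescaFriction_smul_iff hγ).symm.trans (eq_ballProj_sub_iff hs.le).symm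
end

section
/- Let E be a real inner product space and let s > 0. The functional K : E → ℝ defined by K(x) = (1/2)·‖x‖² − (1/2)·‖x − [x]ₛ‖² is Fréchet differentiable at every x ∈ E, and its derivative at x is the continuous linear functional h ↦ ⟪[x]ₛ, h⟫; that is, DK(x) = [x]ₛ. (This is the differentiation fact underlying the first-order optimality condition of the Nitsche energy with Tresca friction.) -/
open scoped RealInnerProductSpace

variable {E : Type*} [NormedAddCommGroup E] [InnerProductSpace ℝ E]

lemma norm_sub_ballProj (r : ℝ) (hr : 0 ≤ r) (x : E) :
    ‖x - ballProj r x‖ = max (‖x‖ - r) 0 := by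
  unfold ballProj
  split_ifs with h
  · simp [max_eq_right (sub_nonpos.2 h)]
  · push_neg at h
    have hx : (0:ℝ) < ‖x‖ := lt_of_le_of_lt hr h
    have h1 : x - (r / ‖x‖) • x = (1 - r / ‖x‖) • x := by
      rw [sub_smul, one_smul]
    rw [h1, norm_smul, Real.norm_eq_abs,
      abs_of_nonneg (by rw [sub_nonneg]; exact (div_le_one hx).2 h.le),
      max_eq_left (by linarith)]
    field_simp

/-- The functional `K(x) = (1/2)‖x‖² - (1/2)‖x - [x]ₛ‖²` is Fréchet
differentiable at every `x`, with derivative `h ↦ ⟪[x]ₛ, h⟫`,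
i.e. `DK(x) = [x]ₛ`. -/
theorem hasFDerivAt_nitsche_tresca_energy (s : ℝ) (hs : 0 < s) (x : E) :
    HasFDerivAt
      (fun y : E => (1 / 2 : ℝ) * ‖y‖ ^ 2 - (1 / 2 : ℝ) * ‖y - ballProj s y‖ ^ 2)
      (innerSL ℝ (ballProj s x)) x := by
  rcases lt_trichotomy ‖x‖ s with h | h | h
  · -- interior of the ball: K equals (1/2)‖y‖² nearby
    have hproj : ballProj s x = x := if_pos h.le
    rw [hproj]
    have hd : HasFDerivAt (fun y : E => (1 / 2 : ℝ) * ‖y‖ ^ 2) (innerSL ℝ x) x := by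
      have := ((hasStrictFDerivAt_norm_sq x).hasFDerivAt).const_mul (1 / 2 : ℝ)
      refine this.congr_fderiv ?_
      ext y
      simp [two_smul]
      ring
    apply hd.congr_of_eventuallyEq
    have hev : ∀ᶠ y : E in nhds x, ‖y‖ < s :=
      (continuous_norm.continuousAt (x := x)).eventually_lt continuousAt_const h
    filter_upwards [hev] with y hy
    rw [norm_sub_ballProj s hs.le]
    rw [max_eq_right (by linarith)]
    ring
  · -- boundary: direct little-o estimate
    have hproj : ballProj s x = x := if_pos h.le
    rw [hproj, hasFDerivAt_iff_isLittleO]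
    have key : ∀ y : E,
        ‖(1 / 2 : ℝ) * ‖y‖ ^ 2 - (1 / 2 : ℝ) * ‖y - ballProj s y‖ ^ 2 -
          ((1 / 2 : ℝ) * ‖x‖ ^ 2 - (1 / 2 : ℝ) * ‖x - ballProj s x‖ ^ 2) -
          (innerSL ℝ x) (y - x)‖ ≤ ‖y - x‖ ^ 2 := by
      intro y
      rw [norm_sub_ballProj s hs.le y]
      have hxx : x - ballProj s x = 0 := by rw [hproj, sub_self]
      rw [hxx, norm_zero]
      have hx0 : max (‖x‖ - s) 0 = 0 := by rw [max_eq_right (by linarith)]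
      have hy2 : ‖y‖ ^ 2 = ‖x‖ ^ 2 + 2 * ⟪x, y - x⟫ + ‖y - x‖ ^ 2 := by
        have := norm_add_sq_real x (y - x)
        simpa using this
      have hm : max (‖y‖ - s) 0 ≤ ‖y - x‖ := by
        have h1 : ‖y‖ - s ≤ ‖y - x‖ := by
          have := norm_sub_norm_le y x
          linarith
        exact max_le h1 (norm_nonneg _)
      have hm0 : 0 ≤ max (‖y‖ - s) 0 := le_max_right _ _
      have hm2 : max (‖y‖ - s) 0 ^ 2 ≤ ‖y - x‖ ^ 2 := by
        apply pow_le_pow_left₀ hm0 hm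
      simp only [innerSL_apply_apply, hx0, hy2]
      rw [show (1 / 2 : ℝ) * (‖x‖ ^ 2 + 2 * ⟪x, y - x⟫ + ‖y - x‖ ^ 2) -
          (1 / 2 : ℝ) * max (‖y‖ - s) 0 ^ 2 -
          ((1 / 2 : ℝ) * ‖x‖ ^ 2 - (1 / 2 : ℝ) * (0:ℝ) ^ 2) - ⟪x, y - x⟫
          = (1 / 2 : ℝ) * ‖y - x‖ ^ 2 - (1 / 2 : ℝ) * max (‖y‖ - s) 0 ^ 2 by ring]
      rw [Real.norm_eq_abs, abs_le]
      constructor <;> nlinarith [sq_nonneg (‖y - x‖), hm2]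
    have hO : (fun y : E => (1 / 2 : ℝ) * ‖y‖ ^ 2 - (1 / 2 : ℝ) * ‖y - ballProj s y‖ ^ 2 -
        ((1 / 2 : ℝ) * ‖x‖ ^ 2 - (1 / 2 : ℝ) * ‖x - ballProj s x‖ ^ 2) -
        (innerSL ℝ x) (y - x)) =O[nhds x] fun y => ‖y - x‖ ^ 2 := by
      apply Asymptotics.IsBigO.of_bound 1
      filter_upwards with y
      simpa using key y
    have ho : (fun y : E => ‖y - x‖ ^ 2) =o[nhds x] fun y => y - x := by
      rw [← Asymptotics.isLittleO_norm_right]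
      have h1 : (fun y : E => ‖y - x‖) =o[nhds x] (fun _ => (1 : ℝ)) := by
        rw [Asymptotics.isLittleO_one_iff]
        have : Filter.Tendsto (fun y : E => y - x) (nhds x) (nhds (x - x)) :=
          Filter.Tendsto.sub_const Filter.tendsto_id x
        simpa using this.norm
      have := h1.mul_isBigO (Asymptotics.isBigO_refl (fun y : E => ‖y - x‖) (nhds x))
      simpa [pow_two] using this
    exact hO.trans_isLittleO ho
  · -- outside the ball: K equals s‖y‖ - s²/2 nearby
    have hx0 : (0:ℝ) < ‖x‖ := hs.trans h
    have hproj : ballProj s x = (s / ‖x‖) • x := if_neg (not_le.2 h)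
    rw [hproj]
    have hsq : HasFDerivAt (fun y : E => ‖y‖ ^ 2) (2 • innerSL ℝ x) x :=
      (hasStrictFDerivAt_norm_sq x).hasFDerivAt
    have hx2 : ‖x‖ ^ 2 ≠ 0 := by positivity
    have hsqrt := hsq.sqrt hx2
    have hd : HasFDerivAt (fun y : E => s * Real.sqrt (‖y‖ ^ 2) - s ^ 2 / 2)
        (innerSL ℝ ((s / ‖x‖) • x)) x := by
      have := (hsqrt.const_mul s).sub_const (s ^ 2 / 2)
      refine this.congr_fderiv ?_
      ext y
      simp [Real.sqrt_sq hx0.le, real_inner_smul_left]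
      field_simp
    have hd' : HasFDerivAt (fun y : E => s * ‖y‖ - s ^ 2 / 2)
        (innerSL ℝ ((s / ‖x‖) • x)) x := by
      convert hd using 2 with y
      rw [Real.sqrt_sq (norm_nonneg _)]
    apply hd'.congr_of_eventuallyEq
    have hev : ∀ᶠ y : E in nhds x, s < ‖y‖ :=
      continuousAt_const.eventually_lt (continuous_norm.continuousAt (x := x)) h
    filter_upwards [hev] with y hy
    rw [norm_sub_ballProj s hs.le, max_eq_left (by linarith)]
    ring
end

section
/- Let E be a real inner product space, let s > 0, and let x ∈ E with ‖x‖ > s. Then the map y ↦ [y]ₛ is Fréchet differentiable at x with derivative the continuous linear map h ↦ (s/‖x‖) • (h − (⟪x, h⟫/‖x‖²) • x); that is, the differential of [·]ₛ at x is Gₛ(x) = (s/‖x‖)(I − (x ⊗ x)/‖x‖²). -/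
open scoped RealInnerProductSpace

variable {E : Type*} [NormedAddCommGroup E] [InnerProductSpace ℝ E]

lemma hasFDerivAt_norm' (x : E) (hx : x ≠ 0) :
    HasFDerivAt (fun y : E => ‖y‖) ((‖x‖⁻¹ : ℝ) • innerSL ℝ x) x := by
  have h1 : HasFDerivAt (fun y : E => ‖y‖ ^ 2) (2 • innerSL ℝ x) x := by
    simpa using (hasFDerivAt_id x).norm_sq
  have h2 := h1.sqrt (pow_ne_zero 2 (norm_ne_zero_iff.mpr hx))
  have hxn : ‖x‖ ≠ 0 := norm_ne_zero_iff.mpr hx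
  have : (fun y : E => Real.sqrt (‖y‖ ^ 2)) = fun y : E => ‖y‖ := by
    funext y; exact Real.sqrt_sq (norm_nonneg y)
  rw [this] at h2
  convert h2 using 1
  rw [Real.sqrt_sq (norm_nonneg x)]
  ext h
  simp [smul_smul]
  ring

/-- For `‖x‖ > s`, the map `y ↦ [y]ₛ` is Fréchet differentiable at `x` with
derivative `Gₛ(x) = (s/‖x‖) (I - (x ⊗ x)/‖x‖²)`, i.e.
`h ↦ (s/‖x‖) • (h - (⟪x, h⟫/‖x‖²) • x)`. -/
theorem hasFDerivAt_ballProj_of_norm_gt (s : ℝ) (hs : 0 < s) (x : E)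
    (hx : s < ‖x‖) :
    HasFDerivAt (fun y : E => ballProj s y)
      ((s / ‖x‖) • (ContinuousLinearMap.id ℝ E -
        (‖x‖ ^ 2)⁻¹ • (innerSL ℝ x).smulRight x)) x := by
  have hx0 : x ≠ 0 := by intro h; rw [h, norm_zero] at hx; linarith
  have hxn : ‖x‖ ≠ 0 := norm_ne_zero_iff.mpr hx0
  have hnorm := hasFDerivAt_norm' x hx0
  have hinv : HasFDerivAt (fun y : E => s / ‖y‖)
      ((-(s / ‖x‖ ^ 2)) • ((‖x‖⁻¹ : ℝ) • innerSL ℝ x)) x := by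
    have := ((hasDerivAt_inv hxn).comp_hasFDerivAt x hnorm).const_mul s
    convert this using 1
    · rfl
    · rfl
    · ext h
      simp [div_eq_mul_inv]
    · ext h
      simp [div_eq_mul_inv]
      ring
  have hmain : HasFDerivAt (fun y : E => (s / ‖y‖) • y)
      ((s / ‖x‖) • ContinuousLinearMap.id ℝ E +
        ((-(s / ‖x‖ ^ 2)) • ((‖x‖⁻¹ : ℝ) • innerSL ℝ x)).smulRight x) x := by
    exact (hinv.smul (hasFDerivAt_id x)).congr_fderiv (by simp)
  have heq : (fun y : E => ballProj s y) =ᶠ[nhds x] fun y : E => (s / ‖y‖) • y := by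
    filter_upwards [(isOpen_lt continuous_const continuous_norm).mem_nhds hx] with y hy
    simp [ballProj, not_le.mpr hy]
  refine (hmain.congr_of_eventuallyEq heq).congr_fderiv ?_
  ext h
  simp [smul_smul, smul_sub, sub_eq_add_neg]
  match_scalars <;> ring
end
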